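/- For any x > 0, log(1+x) - 5/3 + 3/(x+1) - 2/(x+1)² + 2/(3(x+1)³) > 0. -/

import Mathlib

/-!
Keeping only the first term of the series
`log (1 + x) = ∑ 2 / (2k + 1) * (x / (x + 2)) ^ (2k + 1)` gives `2x / (x + 2) ≤ log (1 + x)`.
With this bound in place of the logarithm, the left-hand side becomes the rational function
`x² (x² + 2x + 3) / (3 (x + 1)³ (x + 2))`, which is positive for `x > 0`.
-/

open Real

lemma two_mul_div_add_two_le_log_one_add {x : ℝ} (hx : 0 ≤ x) :
    2 * x / (x + 2) ≤ log (1 + x) := by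
  have h := le_hasSum (hasSum_log_one_add hx) 0 fun k _ => by positivity
  simpa [mul_div_assoc] using h

lemma two_mul_div_add_two_sub_five_thirds_add_eq {x : ℝ} (h₁ : x + 1 ≠ 0) (h₂ : x + 2 ≠ 0) :
    2 * x / (x + 2) - 5 / 3 + 3 / (x + 1) - 2 / (x + 1) ^ 2 + 2 / (3 * (x + 1) ^ 3)
      = x ^ 2 * (x ^ 2 + 2 * x + 3) / (3 * (x + 1) ^ 3 * (x + 2)) := by
  field_simp
  ring

theorem stmt_16 (x : ℝ) (hx : 0 < x) :
    0 < Real.log (1 + x) - 5 / 3 + 3 / (x + 1) - 2 / (x + 1) ^ 2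
        + 2 / (3 * (x + 1) ^ 3) := by
  calc 0 < x ^ 2 * (x ^ 2 + 2 * x + 3) / (3 * (x + 1) ^ 3 * (x + 2)) := by positivity
    _ = 2 * x / (x + 2) - 5 / 3 + 3 / (x + 1) - 2 / (x + 1) ^ 2 + 2 / (3 * (x + 1) ^ 3) :=
      (two_mul_div_add_two_sub_five_thirds_add_eq (by positivity) (by positivity)).symm
    _ ≤ _ := by gcongr; exact two_mul_div_add_two_le_log_one_add hx.le
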